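/- Let T ∈ ℂ^{n×n×n×n} be a nonzero CPS tensor. Consider the convex problem (P'): minimize −⟨T,X⟩ over CPS tensors X with ‖X_{[3,2;1,4]}‖_* ≤ 1, and the rank-constrained problem (Q): minimize −⟨T,X⟩ over CPS tensors X with rank(X_{[3,2;1,4]}) = 1 and ‖X‖_F = 1. Let X̂ be an optimal solution of (P'). Then X̂ is a global minimizer of (Q) if and only if ‖X̂‖_F = 1. -/

import Mathlib

open scoped BigOperators ComplexOrder

/-- A fourth-order complex tensor is conjugate partial-symmetric (CPS). -/
def IsCPS {n : ℕ} (A : Fin n → Fin n → Fin n → Fin n → ℂ) : Prop :=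
  ∀ i j k l, A i j k l = A j i k l ∧ A i j k l = A i j l k ∧
    A i j k l = starRingEnd ℂ (A k l i j)

/-- Inner product of fourth-order complex tensors. -/
noncomputable def tInner {n : ℕ} (A B : Fin n → Fin n → Fin n → Fin n → ℂ) : ℂ :=
  ∑ i, ∑ j, ∑ k, ∑ l, A i j k l * starRingEnd ℂ (B i j k l)

/-- Frobenius norm of a fourth-order complex tensor. -/
noncomputable def tNorm {n : ℕ} (A : Fin n → Fin n → Fin n → Fin n → ℂ) : ℝ :=
  Real.sqrt (∑ i, ∑ j, ∑ k, ∑ l, ‖A i j k l‖ ^ 2)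

/-- The unfolding `T_{[3,2;1,4]}`: the entry in the row indexed by `(k,j)` and
the column indexed by `(i,l)` is `T_{ijkl}`. -/
def unfold3214 {n : ℕ} (T : Fin n → Fin n → Fin n → Fin n → ℂ) :
    Matrix (Fin n × Fin n) (Fin n × Fin n) ℂ :=
  fun p q => T q.1 p.2 p.1 q.2

/-- The nuclear norm of a complex square matrix: the trace of the positive
semidefinite square root of `Xᴴ X`. -/
noncomputable def nuclearNorm {m : Type*} [Fintype m] [DecidableEq m]
    (X : Matrix m m ℂ) : ℝ :=
  ((Matrix.posSemidef_conjTranspose_mul_self X).1.eigenvectorUnitary.1 *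
    Matrix.diagonal (((↑) : ℝ → ℂ) ∘ (√·) ∘ (Matrix.posSemidef_conjTranspose_mul_self X).1.eigenvalues) *
    (star (Matrix.posSemidef_conjTranspose_mul_self X).1.eigenvectorUnitary : Matrix m m ℂ)).trace.re

/-!
With singular values `σᵢ = √λᵢ(XᴴX)` of the unfolding, `‖X‖_* = ∑ σᵢ`, `‖X‖_F² = ∑ σᵢ²` and
`rank = #{i | σᵢ ≠ 0}`. When `∑ σᵢ² = 1` we have `∑ σᵢ ≥ ∑ σᵢ² = 1`, with equality exactly when
a single `σᵢ` is nonzero. So on the Frobenius unit sphere the rank-one matrices are precisely those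
of nuclear norm at most one: `(Q)` is `(P')` restricted to that sphere, and an optimum of `(P')`
on the sphere is an optimum of `(Q)`.
-/

lemma sum_le_one_iff_card_ne_zero_eq_one {ι : Type*} [Fintype ι] {μ : ι → ℝ}
    (hμ : ∀ i, 0 ≤ μ i) (hsq : ∑ i, μ i ^ 2 = 1) :
    ∑ i, μ i ≤ 1 ↔ Fintype.card {i // μ i ≠ 0} = 1 := by
  classical
  constructor
  · intro hsum
    have hsq_le : ∀ i, μ i ^ 2 ≤ μ i := fun i => by
      have : μ i ≤ 1 := (Finset.single_le_sum (fun j _ => hμ j) (Finset.mem_univ i)).trans hsum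
      nlinarith [hμ i]
    have hsum_eq : ∑ i, μ i = 1 := le_antisymm hsum (hsq ▸ Finset.sum_le_sum fun i _ => hsq_le i)
    have hsq_eq : ∀ i, μ i ^ 2 = μ i := by
      have : ∑ i, (μ i - μ i ^ 2) = 0 := by rw [Finset.sum_sub_distrib, hsum_eq, hsq, sub_self]
      intro i
      have := (Finset.sum_eq_zero_iff_of_nonneg fun j _ => sub_nonneg.mpr (hsq_le j)).mp this i
        (Finset.mem_univ i)
      linarith
    have hone : ∀ i, μ i ≠ 0 → μ i = 1 := fun i hi =>
      mul_left_cancel₀ hi (by rw [mul_one, ← sq, hsq_eq])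
    rw [Fintype.card_subtype, ← Nat.cast_inj (R := ℝ), Nat.cast_one, ← hsum_eq,
      ← Finset.sum_filter_ne_zero, Finset.cast_card]
    exact Finset.sum_congr rfl fun i hi => (hone i (Finset.mem_filter.mp hi).2).symm
  · intro hcard
    obtain ⟨⟨i₀, _⟩, huniq⟩ := Fintype.card_eq_one_iff.mp hcard
    have hzero : ∀ j, j ≠ i₀ → μ j = 0 := fun j hj => by
      by_contra h
      exact hj (congrArg Subtype.val (huniq ⟨j, h⟩))
    have hsq₀ : μ i₀ ^ 2 = 1 := by
      rwa [Fintype.sum_eq_single i₀ fun j hj => by rw [hzero j hj, sq, mul_zero]] at hsq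
    rw [Fintype.sum_eq_single i₀ hzero]
    nlinarith [hμ i₀]

namespace Matrix

lemma re_trace_conjTranspose_mul_self {k m : Type*} [Fintype k] [Fintype m]
    (M : Matrix k m ℂ) :
    (Mᴴ * M).trace.re = ∑ p, ∑ q, ‖M p q‖ ^ 2 := by
  simp only [trace, diag, mul_apply, conjTranspose_apply, Complex.star_def, Complex.conj_mul',
    Complex.re_sum, ← Complex.ofReal_pow, Complex.ofReal_re]
  exact Finset.sum_comm

variable {m : Type*} [Fintype m] [DecidableEq m]

noncomputable def singularValues (M : Matrix m m ℂ) : m → ℝ :=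
  fun i => √((posSemidef_conjTranspose_mul_self M).1.eigenvalues i)

lemma nuclearNorm_eq_sum_singularValues (M : Matrix m m ℂ) :
    nuclearNorm M = ∑ i, M.singularValues i := by
  rw [nuclearNorm, trace_mul_cycle, Unitary.coe_star_mul_self, one_mul, trace_diagonal]
  simp [Complex.re_sum, singularValues]

lemma sum_singularValues_sq (M : Matrix m m ℂ) :
    ∑ i, M.singularValues i ^ 2 = ∑ p, ∑ q, ‖M p q‖ ^ 2 := by
  have hA := posSemidef_conjTranspose_mul_self M
  calc ∑ i, M.singularValues i ^ 2 = ∑ i, hA.1.eigenvalues i :=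
        Finset.sum_congr rfl fun i _ => Real.sq_sqrt (hA.eigenvalues_nonneg i)
    _ = (Mᴴ * M).trace.re := by simp [hA.1.trace_eq_sum_eigenvalues, Complex.re_sum]
    _ = ∑ p, ∑ q, ‖M p q‖ ^ 2 := re_trace_conjTranspose_mul_self M

lemma rank_eq_card_singularValues_ne_zero (M : Matrix m m ℂ) :
    M.rank = Fintype.card {i // M.singularValues i ≠ 0} := by
  rw [← rank_conjTranspose_mul_self,
    (posSemidef_conjTranspose_mul_self M).1.rank_eq_card_non_zero_eigs]
  refine Fintype.card_congr (Equiv.subtypeEquivRight fun i => ?_)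
  rw [singularValues, not_iff_not, Real.sqrt_eq_zero
    (PosSemidef.eigenvalues_nonneg (posSemidef_conjTranspose_mul_self M) i)]

lemma nuclearNorm_le_one_iff_rank_eq_one {M : Matrix m m ℂ}
    (hM : ∑ p, ∑ q, ‖M p q‖ ^ 2 = 1) : nuclearNorm M ≤ 1 ↔ M.rank = 1 := by
  rw [nuclearNorm_eq_sum_singularValues, rank_eq_card_singularValues_ne_zero]
  exact sum_le_one_iff_card_ne_zero_eq_one (fun i => Real.sqrt_nonneg _)
    ((sum_singularValues_sq M).trans hM)

end Matrix

lemma sum_norm_sq_unfold3214 {n : ℕ} (X : Fin n → Fin n → Fin n → Fin n → ℂ) :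
    ∑ p, ∑ q, ‖unfold3214 X p q‖ ^ 2 = ∑ i, ∑ j, ∑ k, ∑ l, ‖X i j k l‖ ^ 2 := by
  simp only [unfold3214, Fintype.sum_prod_type]
  calc ∑ k, ∑ j, ∑ i, ∑ l, ‖X i j k l‖ ^ 2
      = ∑ j, ∑ k, ∑ i, ∑ l, ‖X i j k l‖ ^ 2 := Finset.sum_comm
    _ = ∑ j, ∑ i, ∑ k, ∑ l, ‖X i j k l‖ ^ 2 := Finset.sum_congr rfl fun _ _ => Finset.sum_comm
    _ = ∑ i, ∑ j, ∑ k, ∑ l, ‖X i j k l‖ ^ 2 := Finset.sum_comm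

lemma nuclearNorm_unfold3214_le_one_iff_rank_eq_one {n : ℕ}
    {X : Fin n → Fin n → Fin n → Fin n → ℂ} (hX : tNorm X = 1) :
    nuclearNorm (unfold3214 X) ≤ 1 ↔ (unfold3214 X).rank = 1 :=
  Matrix.nuclearNorm_le_one_iff_rank_eq_one
    ((sum_norm_sq_unfold3214 X).trans (Real.sqrt_eq_one.mp hX))

theorem convex_relaxation_constrained_global_iff_general {n : ℕ}
    (T : Fin n → Fin n → Fin n → Fin n → ℂ)
    (Xhat : Fin n → Fin n → Fin n → Fin n → ℂ)
    (hXhatFeas : nuclearNorm (unfold3214 Xhat) ≤ 1)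
    (hXhatOpt : ∀ X : Fin n → Fin n → Fin n → Fin n → ℂ, IsCPS X →
      nuclearNorm (unfold3214 X) ≤ 1 →
      -(tInner T Xhat).re ≤ -(tInner T X).re) :
    ((unfold3214 Xhat).rank = 1 ∧ tNorm Xhat = 1 ∧
      (∀ X : Fin n → Fin n → Fin n → Fin n → ℂ, IsCPS X →
        (unfold3214 X).rank = 1 → tNorm X = 1 →
        -(tInner T Xhat).re ≤ -(tInner T X).re)) ↔
    tNorm Xhat = 1 := by
  refine ⟨fun h => h.2.1, fun hXhat => ⟨?_, hXhat, ?_⟩⟩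
  · exact (nuclearNorm_unfold3214_le_one_iff_rank_eq_one hXhat).mp hXhatFeas
  · intro X hXcps hXrank hX
    exact hXhatOpt X hXcps ((nuclearNorm_unfold3214_le_one_iff_rank_eq_one hX).mpr hXrank)

/-- An optimal solution of the nuclear-norm constrained convex relaxation is a
global minimizer of the rank-constrained problem if and only if its Frobenius
norm equals one. -/
theorem convex_relaxation_constrained_global_iff {n : ℕ}
    (T : Fin n → Fin n → Fin n → Fin n → ℂ) (hTcps : IsCPS T) (hT0 : T ≠ 0)
    (Xhat : Fin n → Fin n → Fin n → Fin n → ℂ)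
    (hXhatCps : IsCPS Xhat) (hXhatFeas : nuclearNorm (unfold3214 Xhat) ≤ 1)
    (hXhatOpt : ∀ X : Fin n → Fin n → Fin n → Fin n → ℂ, IsCPS X →
      nuclearNorm (unfold3214 X) ≤ 1 →
      -(tInner T Xhat).re ≤ -(tInner T X).re) :
    ((unfold3214 Xhat).rank = 1 ∧ tNorm Xhat = 1 ∧
      (∀ X : Fin n → Fin n → Fin n → Fin n → ℂ, IsCPS X →
        (unfold3214 X).rank = 1 → tNorm X = 1 →
        -(tInner T Xhat).re ≤ -(tInner T X).re)) ↔
    tNorm Xhat = 1 :=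
  convex_relaxation_constrained_global_iff_general T Xhat hXhatFeas hXhatOpt
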